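/- In the adp counterexample game, under the log-loss L^p(δ^p, σ^v) = −E_x[log σ^v(1 | x, δ^p(x))] with input distribution Pr(0)=Pr(1)=Pr(2)=a and Pr(3)=1−3a for 0 < a < 1/3, and verifier strategy σ*^v = (5/8)δ₁^v + (3/8)δ₂^v: the prover's loss satisfies L^p(δ₁^p, σ*^v) = a·log(64/9) and L^p(δ₂^p, σ*^v) = a·log(64/15), so L^p(δ₂^p, σ*^v) < L^p(δ₁^p, σ*^v); hence the prover can strictly decrease its loss by deviating from δ₁^p to δ₂^p. -/
import Mathlib


/-- In the adp counterexample with log-loss and input distribution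
`Pr(0)=Pr(1)=Pr(2)=a`, `Pr(3)=1−3a` (`0 < a < 1/3`), against the verifier mixed
strategy `(5/8)·δ₁ᵛ + (3/8)·δ₂ᵛ`, the prover's losses are
`L^p(δ₁ᵖ) = a·log(64/9)` and `L^p(δ₂ᵖ) = a·log(64/15)`, so the prover strictly
decreases its loss by deviating from `δ₁ᵖ` to `δ₂ᵖ`. -/
theorem stmt9 (a : ℝ) (ha0 : 0 < a) (ha : a < 1/3)
    (pacc : ℕ → ℕ → ℝ)
    (hpacc : ∀ x m, pacc x m =
      (5/8) * (if 0 < m ∧ m < 3 then (1:ℝ) else 0)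
        + (3/8) * (if m < 2 then (1:ℝ) else 0))
    (Lp : (ℕ → ℕ) → ℝ)
    (hLp : ∀ δp, Lp δp =
      -(a * Real.log (pacc 0 (δp 0)) + a * Real.log (pacc 1 (δp 1))
        + a * Real.log (pacc 2 (δp 2)) + (1 - 3*a) * Real.log (pacc 3 (δp 3))))
    (δ1p δ2p : ℕ → ℕ)
    (hδ1p : ∀ x, δ1p x = x % 2)
    (hδ2p : ∀ x, δ2p x = 2 - (max x 2 - min x 2)) :
    Lp δ1p = a * Real.log (64/9) ∧
    Lp δ2p = a * Real.log (64/15) ∧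
    Lp δ2p < Lp δ1p := by

  have e1 : Lp δ1p = a * Real.log (64/9) := by
    rw [hLp, hδ1p, hδ1p, hδ1p, hδ1p, hpacc, hpacc, hpacc, hpacc]
    norm_num
    rw [show (64:ℝ)/9 = (3/8)⁻¹^2 by norm_num,
      Real.log_pow, Real.log_inv]
    ring
  have e2 : Lp δ2p = a * Real.log (64/15) := by
    rw [hLp, hδ2p, hδ2p, hδ2p, hδ2p, hpacc, hpacc, hpacc, hpacc]
    norm_num
    rw [show (64:ℝ)/15 = ((3/8)*(5/8))⁻¹ by norm_num,
      Real.log_inv, Real.log_mul (by norm_num) (by norm_num)]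
    ring
  refine ⟨e1, e2, ?_⟩
  rw [e1, e2]
  have := Real.log_lt_log (by norm_num : (0:ℝ) < 64/15) (by norm_num : (64:ℝ)/15 < 64/9)
  nlinarith
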